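/- Let μ = ρπ be a Borel probability measure on Υ absolutely continuous with respect to π, and let ν be a signed Borel measure on Υ × X finite on Υ × B for every bounded B ⊆ X, such that the Lagrangian satisfies L(μ, ν) < ∞. Then ν is absolutely continuous with respect to π ⊗ m. -/

import Mathlib

open MeasureTheory Filter Topology ENNReal Set Bornology

noncomputable section

namespace PoissonTransport

attribute [local instance] Classical.propDecidable

section Core

variable {X : Type*} [MetricSpace X] [MeasurableSpace X] [BorelSpace X]

/-- A real-valued test function on the base space: continuous, bounded, and
vanishing outside a bounded set (the class `𝒞₀(X)` of the paper). -/
def IsC0 (f : X → ℝ) : Prop :=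
  Continuous f ∧ (∃ C : ℝ, ∀ x, |f x| ≤ C) ∧ ∃ B : Set X, IsBounded B ∧ ∀ x ∉ B, f x = 0

/-- A configuration: a Borel measure that is `ℕ ∪ {∞}`-valued and finite on
bounded (Borel) sets. -/
def IsConfiguration (η : Measure X) : Prop :=
  (∀ B : Set X, MeasurableSet B → η B = ⊤ ∨ ∃ n : ℕ, η B = (n : ℝ≥0∞)) ∧
  ∀ B : Set X, MeasurableSet B → IsBounded B → η B < ⊤

end Core

/-- The configuration space `Υ` over `X`. -/
def Config (X : Type*) [MetricSpace X] [MeasurableSpace X] [BorelSpace X] : Type _ :=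
  {η : Measure X // IsConfiguration η}

section ConfigSec

variable {X : Type*} [MetricSpace X] [MeasurableSpace X] [BorelSpace X]

/-- The vague topology on the configuration space: the initial topology of the
maps `η ↦ ∫ f dη`, `f ∈ 𝒞₀(X)`. -/
instance : TopologicalSpace (Config X) :=
  ⨅ f : {f : X → ℝ // IsC0 f},
    TopologicalSpace.induced (fun η : Config X => ∫ x, f.1 x ∂η.1) inferInstance

instance : MeasurableSpace (Config X) := borel _

instance : BorelSpace (Config X) := ⟨rfl⟩

lemma isConfiguration_add_dirac (η : Config X) (x : X) :
    IsConfiguration (η.1 + Measure.dirac x) := by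
  obtain ⟨hval, hfin⟩ := η.2
  constructor
  · intro B hB
    rw [Measure.add_apply, Measure.dirac_apply' _ hB]
    rcases hval B hB with h | ⟨n, hn⟩
    · left; rw [h]; simp
    · right
      by_cases hx : x ∈ B
      · refine ⟨n + 1, ?_⟩
        rw [hn, Set.indicator_of_mem hx, Pi.one_apply]
        push_cast; ring
      · exact ⟨n, by rw [hn, Set.indicator_of_notMem hx]; simp⟩
  · intro B hB hBb
    rw [Measure.add_apply]
    exact ENNReal.add_lt_top.mpr ⟨hfin B hB hBb, measure_lt_top _ _⟩

/-- `η + δ_x`. -/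
def addPoint (η : Config X) (x : X) : Config X :=
  ⟨η.1 + Measure.dirac x, isConfiguration_add_dirac η x⟩

/-- `η - δ_x` (defined as `η` in the degenerate case where the measure
difference is not a configuration). -/
def removePoint (η : Config X) (x : X) : Config X :=
  if h : IsConfiguration (η.1 - Measure.dirac x) then ⟨_, h⟩ else η

/-- The difference operator `D F (η, x) = F(η + δ_x) - F(η)`. -/
def Dop (F : Config X → ℝ) (p : Config X × X) : ℝ := F (addPoint p.1 p.2) - F p.1

/-- The function `η ↦ exp(-η(h))`. -/
def expIota (h : X → ℝ) (η : Config X) : ℝ := Real.exp (-∫ x, h x ∂η.1)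

/-- A point process with an intensity measure finite on bounded (Borel) sets. -/
def IsLocInt (μ : Measure (Config X)) : Prop :=
  ∀ B : Set X, MeasurableSet B → IsBounded B → ∫⁻ η, η.1 B ∂μ < ⊤

/-- Sublinear growth for functions on the configuration space. -/
def HasSublinearGrowth (F : Config X → ℝ) : Prop :=
  ∃ c : ℝ, 0 < c ∧ ∃ h : X → ℝ, IsC0 h ∧ ∀ η : Config X, |F η| ≤ c * (1 + ∫ x, h x ∂η.1)

end ConfigSec

/-- The space `𝒫₁(Υ)` of locally integrable point processes. -/
def P1 (X : Type*) [MetricSpace X] [MeasurableSpace X] [BorelSpace X] : Type _ :=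
  {μ : Measure (Config X) // IsProbabilityMeasure μ ∧ IsLocInt μ}

section P1sec

variable {X : Type*} [MetricSpace X] [MeasurableSpace X] [BorelSpace X]

/-- The `𝒫₁(Υ)`-topology: initial topology of integration against continuous
functions of sublinear growth. -/
instance : TopologicalSpace (P1 X) :=
  ⨅ F : {F : Config X → ℝ // Continuous F ∧ HasSublinearGrowth F},
    TopologicalSpace.induced (fun μ : P1 X => ∫ η, F.1 η ∂μ.1) inferInstance

/-- The set-function `(A, B) ↦ ∫∫ 1_B(x) 1_A(η - δ_x) η(dx) μ(dη)` defining the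
reduced Campbell measure. -/
def campbellFn (μ : Measure (Config X)) (A : Set (Config X)) (B : Set X) : ℝ≥0∞ :=
  ∫⁻ η, ∫⁻ x, B.indicator (1 : X → ℝ≥0∞) x *
      A.indicator (1 : Config X → ℝ≥0∞) (removePoint η x) ∂η.1 ∂μ

/-- `ν` is the reduced Campbell measure of `μ`. -/
def IsCampbell (μ : Measure (Config X)) (ν : Measure (Config X × X)) : Prop :=
  ∀ (A : Set (Config X)) (B : Set X), MeasurableSet A → MeasurableSet B →
    ν (A ×ˢ B) = campbellFn μ A B

/-- The Mecke identity `C_π = π ⊗ m`, characterizing the Poisson measure with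
intensity `m`. -/
def MeckeId (m : Measure X) (π : Measure (Config X)) : Prop :=
  ∀ (A : Set (Config X)) (B : Set X), MeasurableSet A → MeasurableSet B →
    campbellFn π A B = π A * m B

/-- Finiteness on sets `Υ × B`, `B` bounded Borel. -/
def IsB0Finite (ν : Measure (Config X × X)) : Prop :=
  ∀ B : Set X, MeasurableSet B → IsBounded B → ν (Set.univ ×ˢ B) < ⊤

end P1sec

/-- The space `M⁺_{b,0}(Υ × X)` of nonnegative measures finite on `Υ × B` for
bounded `B`. -/
def Mb0plus (X : Type*) [MetricSpace X] [MeasurableSpace X] [BorelSpace X] : Type _ :=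
  {ν : Measure (Config X × X) // IsB0Finite ν}

section Mb0sec

variable {X : Type*} [MetricSpace X] [MeasurableSpace X] [BorelSpace X]

/-- Test functions on `Υ × X`: continuous, bounded, vanishing outside `Υ × B`
for some bounded `B`. -/
def IsCb0 (u : Config X × X → ℝ) : Prop :=
  Continuous u ∧ (∃ C : ℝ, ∀ p, |u p| ≤ C) ∧
    ∃ B : Set X, IsBounded B ∧ ∀ p : Config X × X, p.2 ∉ B → u p = 0

instance : TopologicalSpace (Mb0plus X) :=
  ⨅ u : {u : Config X × X → ℝ // IsCb0 u},
    TopologicalSpace.induced (fun ν : Mb0plus X => ∫ p, u.1 p ∂ν.1) inferInstance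

/-- The reduced Campbell measure of `μ`, as an element of `M⁺_{b,0}(Υ × X)`. -/
def campbellB0 (μ : Measure (Config X)) : Mb0plus X :=
  if h : ∃ ν : Mb0plus X, IsCampbell μ ν.1 then h.choose
  else ⟨0, fun _ _ _ => by simp⟩

/-- The reduced Campbell measure of `μ`, as a measure on `Υ × X`. -/
def campbellMeasure (μ : Measure (Config X)) : Measure (Config X × X) :=
  if h : ∃ ν : Measure (Config X × X), IsCampbell μ ν then h.choose else 0

end Mb0sec

/-- A signed measure on `Υ × X`, finite on `Υ × B` for bounded `B`, encoded by
its Jordan decomposition. -/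
structure LocSigned (X : Type*) [MetricSpace X] [MeasurableSpace X] [BorelSpace X] where
  pos : Measure (Config X × X)
  neg : Measure (Config X × X)
  singular : pos ⟂ₘ neg
  locFinPos : IsB0Finite pos
  locFinNeg : IsB0Finite neg

section Main

variable {X : Type*} [MetricSpace X] [MeasurableSpace X] [BorelSpace X]

/-- Integration of a function against a `LocSigned` measure. -/
def pairLS (ν : LocSigned X) (u : Config X × X → ℝ) : ℝ :=
  ∫ p, u p ∂ν.pos - ∫ p, u p ∂ν.neg

/-- The (non-local) continuity equation on `[0, T]`, in weak form, tested
against functions `G = exp(-ι_h)` (whose linear span is the class `𝒮` of the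
paper) and `φ ∈ C_c^∞((0,T))`. -/
def SolvesCE (T : ℝ) (μ : ℝ → Measure (Config X)) (ν : ℝ → LocSigned X) : Prop :=
  (∀ t ∈ Set.Icc (0 : ℝ) T, IsProbabilityMeasure (μ t)) ∧
  (∀ B : Set X, MeasurableSet B → IsBounded B →
    ∫⁻ t in Set.Ioc (0 : ℝ) T,
        ((ν t).pos (Set.univ ×ˢ B) + (ν t).neg (Set.univ ×ˢ B)) < ⊤) ∧
  ∀ h : X → ℝ, IsC0 h → (∀ x, 0 ≤ h x) →
    ∀ φ : ℝ → ℝ, ContDiff ℝ (⊤ : ℕ∞) φ → tsupport φ ⊆ Set.Ioo 0 T →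
      (∫ t in Set.Ioc (0 : ℝ) T, deriv φ t * ∫ η, expIota h η ∂(μ t)) +
        (∫ t in Set.Ioc (0 : ℝ) T, φ t * pairLS (ν t) (Dop (expIota h))) = 0

/-- The logarithmic mean `θ(s,t) = (s - t)/(log s - log t)`. -/
def logMean (s t : ℝ) : ℝ :=
  if s = t then s else if s = 0 ∨ t = 0 then 0 else (s - t) / (Real.log s - Real.log t)

/-- `α(s, t, w) = |w|² / θ(s,t)`, with the convention `0/0 = 0`. -/
def alphaFn (s t w : ℝ) : ℝ≥0∞ :=
  if w = 0 then 0 else if logMean s t = 0 then ⊤ else ENNReal.ofReal (w ^ 2 / logMean s t)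

/-- `(a - b)(log a - log b)`, valued in `[0,∞]`. -/
def dlogMul (a b : ℝ) : ℝ≥0∞ :=
  if a = b then 0 else if a = 0 ∨ b = 0 then ⊤
  else ENNReal.ofReal ((a - b) * (Real.log a - Real.log b))

/-- The Lagrangian `L(μ, ν)`, for `ν` given by the pair `(p, n)` (`ν = p - n`),
computed with the dominating measure `σ = μ ⊗ m + C_μ + p + n`. -/
def lagrangian (m : Measure X) (μ : Measure (Config X))
    (p n : Measure (Config X × X)) : ℝ≥0∞ :=
  ∫⁻ q, alphaFn ((μ.prod m).rnDeriv (μ.prod m + campbellMeasure μ + p + n) q).toReal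
      ((campbellMeasure μ).rnDeriv (μ.prod m + campbellMeasure μ + p + n) q).toReal
      (((p.rnDeriv (μ.prod m + campbellMeasure μ + p + n) q).toReal) -
        ((n.rnDeriv (μ.prod m + campbellMeasure μ + p + n) q).toReal))
    ∂(μ.prod m + campbellMeasure μ + p + n)

def lagrangianLS (m : Measure X) (μ : Measure (Config X)) (ν : LocSigned X) : ℝ≥0∞ :=
  lagrangian m μ ν.pos ν.neg

/-- `θ(s) = s log s - s + 1 ≥ 0`. -/
def entθ (s : ℝ) : ℝ := s * Real.log s - s + 1

/-- The relative entropy `H(μ | π) ∈ [0, ∞]` (`π` a probability measure). -/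
def relEnt (μ π : Measure (Config X)) : ℝ≥0∞ :=
  if μ ≪ π then ∫⁻ η, ENNReal.ofReal (entθ ((μ.rnDeriv π η).toReal)) ∂π else ⊤

/-- The modified Fisher information `I(μ | π) = ∫ Dρ · D log ρ d(π ⊗ m)`. -/
def fisher (μ π : Measure (Config X)) (m : Measure X) : ℝ≥0∞ :=
  if μ ≪ π then
    ∫⁻ q : Config X × X,
      dlogMul ((μ.rnDeriv π (addPoint q.1 q.2)).toReal) ((μ.rnDeriv π q.1).toReal)
      ∂(π.prod m)
  else ⊤

/-- The squared transport distance `W²(ξ₀, ξ₁)`: Benamou–Brenier infimum of the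
action over continuous `𝒫₁(Υ)`-valued solutions of the continuity equation
joining `ξ₀` to `ξ₁`. -/
def Wsq (m : Measure X) (ξ₀ ξ₁ : P1 X) : ℝ≥0∞ :=
  ⨅ (γ : ℝ → P1 X) (_ : ContinuousOn γ (Set.Icc 0 1) ∧ γ 0 = ξ₀ ∧ γ 1 = ξ₁)
    (ν : ℝ → LocSigned X) (_ : SolvesCE 1 (fun t => (γ t).1) ν),
    ∫⁻ t in Set.Ioc (0 : ℝ) 1, lagrangianLS m (γ t).1 (ν t)

/-- The transport distance `W`. -/
def Wd (m : Measure X) (ξ₀ ξ₁ : P1 X) : ℝ≥0∞ := Wsq m ξ₀ ξ₁ ^ (2⁻¹ : ℝ)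

/-- The entropic cost `𝒥_ε`. -/
def entCost (m : Measure X) (π : Measure (Config X)) (ε : ℝ≥0∞) (ξ₀ ξ₁ : P1 X) : ℝ≥0∞ :=
  ⨅ (γ : ℝ → P1 X) (_ : ContinuousOn γ (Set.Icc 0 1) ∧ γ 0 = ξ₀ ∧ γ 1 = ξ₁)
    (ν : ℝ → LocSigned X) (_ : SolvesCE 1 (fun t => (γ t).1) ν),
    (∫⁻ t in Set.Ioc (0 : ℝ) 1, lagrangianLS m (γ t).1 (ν t)) +
      ε * ∫⁻ t in Set.Ioc (0 : ℝ) 1, fisher (γ t).1 π m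

/-- Mehler's formula applied to `exp(-ι_h)`:
`P_t (exp (-ι_h)) = exp(-(1 - e^{-t}) ∫ (1 - e^{-h}) dm) · exp(ι_{log(1 - e^{-t}(1 - e^{-h}))})`. -/
def mehlerExp (m : Measure X) (t : ℝ) (h : X → ℝ) (η : Config X) : ℝ :=
  Real.exp (-(1 - Real.exp (-t)) * ∫ x, (1 - Real.exp (-h x)) ∂m) *
    Real.exp (∫ x, Real.log (1 - Real.exp (-t) * (1 - Real.exp (-h x))) ∂η.1)

/-- The dual Ornstein–Uhlenbeck semigroup, characterized via Mehler's formula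
through Laplace functionals (which determine point processes uniquely). -/
def IsOUDual (m : Measure X) (Pstar : ℝ → Measure (Config X) → Measure (Config X)) : Prop :=
  ∀ t : ℝ, 0 ≤ t → ∀ μ : Measure (Config X), IsProbabilityMeasure μ →
    IsProbabilityMeasure (Pstar t μ) ∧
    ∀ h : X → ℝ, IsC0 h → (∀ x, 0 ≤ h x) →
      ∫ η, expIota h η ∂(Pstar t μ) = ∫ η, mehlerExp m t h η ∂μ

/-- The dual Ornstein–Uhlenbeck semigroup acting in the `Υ`-coordinate on
measures on `Υ × X`, characterized via Mehler's formula. -/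
def IsOUDualJoint (m : Measure X)
    (PJ : ℝ → Measure (Config X × X) → Measure (Config X × X)) : Prop :=
  ∀ t : ℝ, 0 ≤ t → ∀ ν : Measure (Config X × X),
    ∀ h : X → ℝ, IsC0 h → (∀ x, 0 ≤ h x) → ∀ B : Set X, MeasurableSet B →
      ∫⁻ p, ENNReal.ofReal (expIota h p.1) * B.indicator (1 : X → ℝ≥0∞) p.2 ∂(PJ t ν) =
        ∫⁻ p, ENNReal.ofReal (mehlerExp m t h p.1) * B.indicator (1 : X → ℝ≥0∞) p.2 ∂ν

/-- The Poisson measure is locally integrable: `I_π = m`. -/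
lemma poisson_locInt {m : Measure X} {π : Measure (Config X)} [IsProbabilityMeasure π]
    (hm : ∀ B : Set X, MeasurableSet B → IsBounded B → m B < ⊤)
    (hM : MeckeId m π) : IsLocInt π := by
  intro B hB hBb
  have h := hM Set.univ B MeasurableSet.univ hB
  have e : campbellFn π Set.univ B = ∫⁻ η, η.1 B ∂π := by
    unfold campbellFn
    refine lintegral_congr fun η => ?_
    simp only [Set.indicator_univ, Pi.one_apply, mul_one]
    exact lintegral_indicator_one hB
  rw [e] at h
  rw [h, measure_univ, one_mul]
  exact hm B hB hBb

end Main

end PoissonTransport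
/-!
Where the density of `μ ⊗ m` with respect to the dominating measure `σ` vanishes, the integrand
`α(0, t, w)` is infinite unless `w = 0`, so a finite Lagrangian forces `dν⁺/dσ = dν⁻/dσ` there.
Since `ν⁺ ⟂ ν⁻`, both parts of `ν` vanish on `μ ⊗ m`-null sets, and `μ ⊗ m ≪ π ⊗ m`.
For the densities to be genuine Radon–Nikodym derivatives, `σ = μ ⊗ m + C_μ + ν⁺ + ν⁻` must be
σ-finite. For the Campbell measure `C_μ`, the rectangles `{η | η(B) ≤ j} × B` with `B` a ball
cover `Υ × X` and have `C_μ`-measure at most `(j + 1) μ(Υ)`, because removing a point lowers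
`η(B)` by at most one.
-/

namespace PoissonTransport

open Metric Measure

section

variable {α : Type*} [MeasurableSpace α]

lemma logMean_zero_left (t : ℝ) : logMean 0 t = 0 := by
  unfold logMean
  split_ifs <;> simp_all

lemma alphaFn_zero_left (t : ℝ) {w : ℝ} (hw : w ≠ 0) : alphaFn 0 t w = ⊤ := by
  rw [alphaFn, if_neg hw, if_pos (logMean_zero_left t)]

lemma _root_.Measurable.logMean {a b : α → ℝ} (ha : Measurable a) (hb : Measurable b) :
    Measurable fun q => logMean (a q) (b q) := by
  unfold PoissonTransport.logMean
  refine Measurable.ite (measurableSet_eq_fun ha hb) ha (Measurable.ite ?_ measurable_const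
    ((ha.sub hb).div ((Real.measurable_log.comp ha).sub (Real.measurable_log.comp hb))))
  exact (measurableSet_eq_fun ha measurable_const).union (measurableSet_eq_fun hb measurable_const)

lemma _root_.Measurable.alphaFn {a b c : α → ℝ} (ha : Measurable a) (hb : Measurable b)
    (hc : Measurable c) : Measurable fun q => alphaFn (a q) (b q) (c q) := by
  unfold PoissonTransport.alphaFn
  exact Measurable.ite (measurableSet_eq_fun hc measurable_const) measurable_const
    (Measurable.ite (measurableSet_eq_fun (ha.logMean hb) measurable_const) measurable_const
      (ENNReal.measurable_ofReal.comp ((hc.pow_const 2).div (ha.logMean hb))))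

lemma ae_restrict_rnDeriv_eq_zero_of_measure_eq_zero (ρ σ : Measure α) {T : Set α}
    (h : ρ T = 0) : ∀ᵐ q ∂σ.restrict T, ρ.rnDeriv σ q = 0 :=
  (lintegral_eq_zero_iff (measurable_rnDeriv ρ σ)).1
    (nonpos_iff_eq_zero.1 (h ▸ setLIntegral_rnDeriv_le T))

theorem measure_eq_of_lintegral_alphaFn_ne_top (A C p n : Measure α)
    [SigmaFinite A] [SigmaFinite C] [SigmaFinite p] [SigmaFinite n]
    (hL : ∫⁻ q, alphaFn (A.rnDeriv (A + C + p + n) q).toReal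
        (C.rnDeriv (A + C + p + n) q).toReal
        ((p.rnDeriv (A + C + p + n) q).toReal - (n.rnDeriv (A + C + p + n) q).toReal)
        ∂(A + C + p + n) ≠ ⊤)
    ⦃T : Set α⦄ (hT : MeasurableSet T) (hA : A T = 0) : p T = n T := by
  set σ := A + C + p + n
  have hpσ : p ≪ σ :=
    absolutelyContinuous_of_le (Measure.le_add_right (Measure.le_add_left le_rfl))
  have hnσ : n ≪ σ := absolutelyContinuous_of_le (Measure.le_add_left le_rfl)
  have hfin := ae_lt_top ((measurable_rnDeriv A σ).ennreal_toReal.alphaFn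
    (measurable_rnDeriv C σ).ennreal_toReal
    ((measurable_rnDeriv p σ).ennreal_toReal.sub (measurable_rnDeriv n σ).ennreal_toReal)) hL
  have hdens : ∀ᵐ q ∂σ.restrict T, p.rnDeriv σ q = n.rnDeriv σ q := by
    filter_upwards [ae_restrict_of_ae hfin, ae_restrict_of_ae (rnDeriv_lt_top p σ),
      ae_restrict_of_ae (rnDeriv_lt_top n σ),
      ae_restrict_rnDeriv_eq_zero_of_measure_eq_zero A σ hA] with q hq hpq hnq hAq
    rw [hAq, ENNReal.toReal_zero] at hq
    refine (ENNReal.toReal_eq_toReal_iff' hpq.ne hnq.ne).1 (by_contra fun hne => ?_)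
    exact hq.ne (alphaFn_zero_left _ (sub_ne_zero.2 hne))
  rw [← setLIntegral_rnDeriv' hpσ hT, ← setLIntegral_rnDeriv' hnσ hT]
  exact lintegral_congr_ae hdens

lemma _root_.MeasureTheory.Measure.MutuallySingular.absolutelyContinuous_of_forall_measure_eq
    {A p n : Measure α} (hpn : p ⟂ₘ n) (h : ∀ ⦃T⦄, MeasurableSet T → A T = 0 → p T = n T) :
    p ≪ A := by
  obtain ⟨E, hE, hpE, hnE⟩ := hpn
  refine AbsolutelyContinuous.mk fun S hS hAS => ?_
  rw [← measure_inter_add_sdiff S hE, measure_mono_null inter_subset_right hpE, zero_add,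
    h (hS.diff hE) (measure_mono_null sdiff_subset hAS)]
  exact measure_mono_null (sdiff_subset_compl S E) hnE

lemma sigmaFinite_of_measure_preimage_isBounded_lt_top {Y : Type*} [PseudoMetricSpace Y]
    [MeasurableSpace Y] [OpensMeasurableSpace Y] {ν : Measure α} {f : α → Y}
    (h : ∀ B : Set Y, MeasurableSet B → IsBounded B → ν (f ⁻¹' B) < ⊤) : SigmaFinite ν := by
  rcases isEmpty_or_nonempty α with hα | ⟨⟨a⟩⟩
  · rw [ν.eq_zero_of_isEmpty]
    infer_instance
  refine sigmaFinite_of_countable (countable_range fun k : ℕ => f ⁻¹' ball (f a) k)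
    (by rintro _ ⟨k, rfl⟩; exact h _ measurableSet_ball isBounded_ball) ?_
  rw [sUnion_range, ← preimage_iUnion, iUnion_ball_nat, preimage_univ]

lemma le_sub_dirac_add_dirac [MeasurableSingletonClass α] (η : Measure α) (x : α) :
    η ≤ η - dirac x + dirac x := by
  rcases le_total 1 (η {x}) with h | h
  · refine (sub_add_cancel_of_le (Measure.le_iff.2 fun s hs => ?_)).ge
    by_cases hx : x ∈ s
    · simpa [hx] using h.trans (measure_mono (singleton_subset_iff.2 hx))
    · simp [hx]
  -- `η - dirac x` is an infimum, so without `dirac x ≤ η` we bound `η` off and on `{x}` apart.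
  · calc η = η.restrict {x}ᶜ + η.restrict {x} :=
          (restrict_compl_add_restrict (measurableSet_singleton x)).symm
      _ ≤ η - dirac x + dirac x := by
          refine add_le_add (le_sInf fun d hd => Measure.le_iff.2 fun s hs => ?_) ?_
          · rw [restrict_apply hs]
            calc η (s ∩ {x}ᶜ) ≤ (d + dirac x) (s ∩ {x}ᶜ) := Measure.le_iff'.1 hd _
              _ = d (s ∩ {x}ᶜ) := by simp
              _ ≤ d s := measure_mono inter_subset_left
          · rw [restrict_singleton]
            calc η {x} • dirac x ≤ (1 : ℝ≥0∞) • dirac x := by gcongr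
              _ = dirac x := one_smul _ _

end

section

variable {Y : Type*} [PseudoMetricSpace Y]

def ballCutoff (y₀ : Y) (r : ℝ) (j : ℕ) (y : Y) : ℝ :=
  min 1 ((j + 1) * max 0 (r - dist y y₀))

lemma ballCutoff_nonneg (y₀ : Y) (r : ℝ) (j : ℕ) (y : Y) : 0 ≤ ballCutoff y₀ r j y :=
  le_min zero_le_one (by positivity)

lemma ballCutoff_le_one (y₀ : Y) (r : ℝ) (j : ℕ) (y : Y) : ballCutoff y₀ r j y ≤ 1 :=
  min_le_left _ _

lemma ballCutoff_eq_zero {y₀ : Y} {r : ℝ} (j : ℕ) {y : Y} (hy : y ∉ ball y₀ r) :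
    ballCutoff y₀ r j y = 0 := by
  rw [mem_ball, not_lt] at hy
  simp [ballCutoff, max_eq_left (sub_nonpos.2 hy)]

lemma monotone_ballCutoff (y₀ : Y) (r : ℝ) (y : Y) : Monotone fun j => ballCutoff y₀ r j y :=
  fun _ _ hij => min_le_min_left _ (mul_le_mul_of_nonneg_right (by gcongr) (le_max_left _ _))

lemma continuous_ballCutoff (y₀ : Y) (r : ℝ) (j : ℕ) : Continuous (ballCutoff y₀ r j) := by
  unfold ballCutoff
  fun_prop

lemma iSup_ofReal_ballCutoff (y₀ : Y) (r : ℝ) (y : Y) :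
    ⨆ j : ℕ, ENNReal.ofReal (ballCutoff y₀ r j y) = (ball y₀ r).indicator 1 y := by
  by_cases hy : y ∈ ball y₀ r
  · rw [indicator_of_mem hy, Pi.one_apply]
    refine le_antisymm (iSup_le fun j => ENNReal.ofReal_le_one.2 (ballCutoff_le_one y₀ r j y)) ?_
    have hpos : 0 < r - dist y y₀ := sub_pos.2 (mem_ball.1 hy)
    obtain ⟨j, hj⟩ := exists_nat_ge (1 / (r - dist y y₀))
    rw [div_le_iff₀ hpos] at hj
    refine le_iSup_of_le j (le_of_eq ?_)
    rw [ballCutoff, max_eq_right hpos.le, min_eq_left (by linarith), ENNReal.ofReal_one]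
  · simp [indicator_of_notMem hy, ballCutoff_eq_zero _ hy]

lemma isC0_ballCutoff {X : Type*} [MetricSpace X] (x₀ : X) (r : ℝ) (j : ℕ) :
    IsC0 (ballCutoff x₀ r j) :=
  ⟨continuous_ballCutoff x₀ r j, ⟨1, fun x => by
    rw [abs_of_nonneg (ballCutoff_nonneg x₀ r j x)]; exact ballCutoff_le_one x₀ r j x⟩,
    ball x₀ r, isBounded_ball, fun _ => ballCutoff_eq_zero j⟩

end

section

variable {X : Type*} [MetricSpace X] [MeasurableSpace X] [BorelSpace X]

lemma IsB0Finite.sigmaFinite {ν : Measure (Config X × X)} (h : IsB0Finite ν) :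
    SigmaFinite ν :=
  sigmaFinite_of_measure_preimage_isBounded_lt_top (f := Prod.snd) fun B hB hBb => by
    simpa only [univ_prod] using h B hB hBb

lemma apply_le_removePoint_apply_add_one (η : Config X) (x : X) (B : Set X) :
    η.1 B ≤ (removePoint η x).1 B + 1 := by
  by_cases h : IsConfiguration (η.1 - dirac x)
  · rw [show removePoint η x = ⟨_, h⟩ from dif_pos h]
    calc η.1 B ≤ (η.1 - dirac x + dirac x) B :=
          Measure.le_iff'.1 (le_sub_dirac_add_dirac η.1 x) B
      _ ≤ (η.1 - dirac x) B + 1 := by rw [Measure.add_apply]; gcongr; exact prob_le_one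
  · rw [show removePoint η x = η from dif_neg h]
    exact le_self_add

lemma campbellFn_le (μ : Measure (Config X)) {B : Set X} (hB : MeasurableSet B) (j : ℕ) :
    campbellFn μ {η | η.1 B ≤ j} B ≤ (j + 1) * μ univ := by
  rw [← lintegral_const]
  refine lintegral_mono fun η => ?_
  by_cases hη : η.1 B ≤ j + 1
  · calc _ ≤ ∫⁻ x, B.indicator 1 x ∂η.1 := lintegral_mono fun x =>
          mul_le_of_le_one_right zero_le
            (indicator_le_self' (s := {η' : Config X | η'.1 B ≤ j}) (fun _ _ => zero_le) _)
      _ = η.1 B := lintegral_indicator_one hB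
      _ ≤ j + 1 := hη
  · have hnot : ∀ x, removePoint η x ∉ {η' : Config X | η'.1 B ≤ j} := fun x hx =>
      hη ((apply_le_removePoint_apply_add_one η x B).trans (add_le_add_left hx 1))
    simp [indicator_of_notMem (hnot _)]

lemma continuous_integral_of_isC0 {f : X → ℝ} (hf : IsC0 f) :
    Continuous fun η : Config X => ∫ x, f x ∂η.1 :=
  continuous_iInf_dom (i := ⟨f, hf⟩) continuous_induced_dom

lemma config_apply_ball_eq_iSup (η : Config X) (x₀ : X) (r : ℝ) :
    η.1 (ball x₀ r) = ⨆ j : ℕ, ENNReal.ofReal (∫ x, ballCutoff x₀ r j x ∂η.1) := by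
  have hint (j : ℕ) : Integrable (ballCutoff x₀ r j) η.1 :=
    (IntegrableOn.of_bound (η.2.2 _ measurableSet_ball isBounded_ball)
      (continuous_ballCutoff x₀ r j).aestronglyMeasurable 1 (ae_of_all _ fun x => by
        rw [Real.norm_eq_abs, abs_of_nonneg (ballCutoff_nonneg x₀ r j x)]
        exact ballCutoff_le_one x₀ r j x)).integrable_of_forall_notMem_eq_zero
      fun _ => ballCutoff_eq_zero j
  calc η.1 (ball x₀ r) = ∫⁻ x, (ball x₀ r).indicator 1 x ∂η.1 :=
        (lintegral_indicator_one measurableSet_ball).symm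
    _ = ∫⁻ x, ⨆ j : ℕ, ENNReal.ofReal (ballCutoff x₀ r j x) ∂η.1 := by
        simp_rw [iSup_ofReal_ballCutoff]
    _ = ⨆ j : ℕ, ∫⁻ x, ENNReal.ofReal (ballCutoff x₀ r j x) ∂η.1 :=
        lintegral_iSup
          (fun j => ENNReal.measurable_ofReal.comp (continuous_ballCutoff x₀ r j).measurable)
          (fun _ _ hij x => ENNReal.ofReal_le_ofReal (monotone_ballCutoff x₀ r x hij))
    _ = ⨆ j : ℕ, ENNReal.ofReal (∫ x, ballCutoff x₀ r j x ∂η.1) := by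
        simp_rw [ofReal_integral_eq_lintegral_ofReal (hint _)
          (ae_of_all _ (ballCutoff_nonneg x₀ r _))]

lemma measurable_config_apply_ball (x₀ : X) (r : ℝ) :
    Measurable fun η : Config X => η.1 (ball x₀ r) := by
  simp_rw [config_apply_ball_eq_iSup _ x₀ r]
  exact .iSup fun j => ENNReal.measurable_ofReal.comp
    (continuous_integral_of_isC0 (isC0_ballCutoff x₀ r j)).measurable

lemma sigmaFinite_of_isCampbell {μ : Measure (Config X)} [IsFiniteMeasure μ]
    {C : Measure (Config X × X)} (h : IsCampbell μ C) : SigmaFinite C := by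
  rcases isEmpty_or_nonempty X with hX | ⟨⟨x₀⟩⟩
  · rw [C.eq_zero_of_isEmpty]
    infer_instance
  let rect : ℕ × ℕ → Set (Config X × X) := fun kj =>
    {η : Config X | η.1 (ball x₀ kj.1) ≤ kj.2} ×ˢ ball x₀ kj.1
  refine sigmaFinite_of_countable (countable_range rect) ?_ ?_
  · rintro _ ⟨⟨k, j⟩, rfl⟩
    exact (h _ _ (measurable_config_apply_ball x₀ k measurableSet_Iic)
      measurableSet_ball).trans_lt ((campbellFn_le μ measurableSet_ball j).trans_lt
        (ENNReal.mul_lt_top (by simp) (measure_lt_top μ _)))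
  · refine sUnion_range rect ▸ eq_univ_of_forall fun ⟨η, x⟩ => ?_
    obtain ⟨k, hk⟩ := exists_nat_gt (dist x x₀)
    obtain ⟨j, hj⟩ :=
      ENNReal.exists_nat_gt (η.2.2 (ball x₀ k) measurableSet_ball isBounded_ball).ne
    exact mem_iUnion.2 ⟨(k, j), hj.le, hk⟩

lemma sigmaFinite_campbellMeasure (μ : Measure (Config X)) [IsFiniteMeasure μ] :
    SigmaFinite (campbellMeasure μ) := by
  unfold campbellMeasure
  split_ifs with h
  exacts [sigmaFinite_of_isCampbell h.choose_spec, inferInstance]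

end

theorem lagrangian_finite_absolutelyContinuous_general
    (X : Type*) [MetricSpace X] [MeasurableSpace X] [BorelSpace X]
    (m : Measure X) (hm : ∀ B : Set X, MeasurableSet B → IsBounded B → m B < ⊤)
    (π : Measure (Config X))
    (μ : Measure (Config X)) [IsProbabilityMeasure μ] (hac : μ ≪ π)
    (ν : LocSigned X) (hL : lagrangianLS m μ ν < ⊤) :
    ν.pos ≪ π.prod m ∧ ν.neg ≪ π.prod m := by
  have : SigmaFinite m := sigmaFinite_of_measure_preimage_isBounded_lt_top (f := id) hm
  have := ν.locFinPos.sigmaFinite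
  have := ν.locFinNeg.sigmaFinite
  have := sigmaFinite_campbellMeasure μ
  have hprod : μ.prod m ≪ π.prod m := hac.prod .rfl
  have heq := measure_eq_of_lintegral_alphaFn_ne_top (μ.prod m) (campbellMeasure μ) ν.pos ν.neg
    hL.ne
  exact ⟨(ν.singular.absolutelyContinuous_of_forall_measure_eq heq).trans hprod,
    (ν.singular.symm.absolutelyContinuous_of_forall_measure_eq
      fun _ hT hA => (heq hT hA).symm).trans hprod⟩

/-- If `μ = ρπ` is a probability measure absolutely
continuous w.r.t. `π` and `ν ∈ M_{b,0}(Υ × X)` has finite Lagrangian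
`L(μ, ν) < ∞`, then `ν` is absolutely continuous with respect to `π ⊗ m`. -/
theorem lagrangian_finite_absolutelyContinuous
    (X : Type*) [MetricSpace X] [CompleteSpace X] [TopologicalSpace.SeparableSpace X]
    [MeasurableSpace X] [BorelSpace X]
    (m : Measure X) (hm : ∀ B : Set X, MeasurableSet B → IsBounded B → m B < ⊤)
    (π : Measure (Config X)) [IsProbabilityMeasure π] (hM : MeckeId m π)
    (μ : Measure (Config X)) [IsProbabilityMeasure μ] (hac : μ ≪ π)
    (ν : LocSigned X) (hL : lagrangianLS m μ ν < ⊤) :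
    ν.pos ≪ π.prod m ∧ ν.neg ≪ π.prod m :=
  lagrangian_finite_absolutelyContinuous_general X m hm π μ hac ν hL

end PoissonTransport
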